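/- Let C = C_b ∪ C_i ∪ C_m be a constraint system where C_b is a set of boolean constraints over boolean variables, C_i is a set of linear constraints over integer variables, and C_m is a set of mixed constraints of the form (b = 1 → c ≥ 1) with b a boolean variable and c a linear combination of integer variables. For a boolean instantiation φ_b, let φ_b(C_m) be the set of constraints c ≥ 1 for those mixed constraints whose boolean variable is set to 1 by φ_b. If C has a solution (φ_b, φ_i), and ψ_b is the minimal solution of C_b, then (ψ_b, φ_i) is also a solution of C. Hence C is satisfiable iff it has a solution whose boolean part is the minimal solution of C_b. -/
import Mathlib


/-- Boolean constraints over boolean variables of type `β`. -/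
inductive BConstr (β : Type*)
  | eq (b₁ b₂ : β)
  | one (b : β)
  | zero (b : β)
  | imp (b b' : β)

/-- Satisfaction of a boolean constraint. -/
def BConstr.Sat {β : Type*} (φ : β → Bool) : BConstr β → Prop
  | .eq b₁ b₂ => φ b₁ = φ b₂
  | .one b => φ b = true
  | .zero b => φ b = false
  | .imp b b' => φ b = true → φ b' = true

/-- Linear constraints over integer variables of type `ι`: equalities and
inequalities among linear combinations (sums of variables). -/
inductive LinConstr (ι : Type*)
  | eq (S S' : Finset ι)
  | le (S S' : Finset ι)

/-- Satisfaction of a linear constraint by an integer instantiation. -/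
def LinConstr.Sat {ι : Type*} (φ : ι → ℤ) : LinConstr ι → Prop
  | .eq S S' => ∑ i ∈ S, φ i = ∑ i ∈ S', φ i
  | .le S S' => ∑ i ∈ S, φ i ≤ ∑ i ∈ S', φ i

/-- A mixed constraint `(b, S)` reads `b = 1 → (∑_{i ∈ S} x i) ≥ 1`. -/
abbrev MixedConstr (β ι : Type*) := β × Finset ι

/-- `(φb, φi)` is a solution of the system `C = Cb ∪ Ci ∪ Cm`. -/
def Solution {β ι : Type*} (Cb : List (BConstr β)) (Ci : List (LinConstr ι))
    (Cm : List (MixedConstr β ι)) (φb : β → Bool) (φi : ι → ℤ) : Prop :=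
  (∀ c ∈ Cb, c.Sat φb) ∧ (∀ c ∈ Ci, c.Sat φi) ∧
    ∀ m ∈ Cm, φb m.1 = true → 1 ≤ ∑ i ∈ m.2, φi i

/-- If `C` has a solution `(φb, φi)` and `ψb` is the minimal solution of
`Cb`, then `(ψb, φi)` is also a solution of `C`; hence `C` is satisfiable
iff it has a solution whose boolean part is the minimal solution of `Cb`. -/
theorem solution_with_minimal_booleans {β ι : Type*}
    (Cb : List (BConstr β)) (Ci : List (LinConstr ι))
    (Cm : List (MixedConstr β ι)) (ψb : β → Bool)
    (hψ : (∀ c ∈ Cb, c.Sat ψb) ∧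
      ∀ φb : β → Bool, (∀ c ∈ Cb, c.Sat φb) → ∀ b, ψb b ≤ φb b) :
    (∀ φb φi, Solution Cb Ci Cm φb φi → Solution Cb Ci Cm ψb φi) ∧
    ((∃ φb φi, Solution Cb Ci Cm φb φi) ↔ ∃ φi, Solution Cb Ci Cm ψb φi) := by
  have key : ∀ φb φi, Solution Cb Ci Cm φb φi → Solution Cb Ci Cm ψb φi := by
    rintro φb φi ⟨hb, hi, hm⟩
    refine ⟨hψ.1, hi, fun m hmem hpsi => hm m hmem ?_⟩
    have := hψ.2 φb hb m.1
    rw [hpsi] at this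
    exact Bool.eq_true_of_true_le this
  exact ⟨key, ⟨fun ⟨φb, φi, h⟩ => ⟨φi, key φb φi h⟩, fun ⟨φi, h⟩ => ⟨ψb, φi, h⟩⟩⟩
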